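/- arXiv:2203.12495 — 8 statements merged into one kernel-verified Lean document; each statement's English description precedes it below -/
import Mathlib

section
/- Let ρ : ℝ^k × ℝ^q × ℝ^d → [0,∞) be a measurable Lebesgue-integrable function (the joint density of (z̃, θ, s_y)), and define f(z̃, u) = ∫_{ℝ^q} ρ(z̃, θ, u) dθ and m(u) = ∫_{ℝ^k} ∫_{ℝ^q} ρ(z̃, θ, u) dθ dz̃. Fix a constant c > 0. Then for almost every point (z̃₀, θ₀, s₀) with respect to the measure with density ρ relative to Lebesgue measure on ℝ^k × ℝ^q × ℝ^d, the following holds: for every sequence of Lebesgue-measurable sets A_t ⊆ ℝ^d and radii r_t > 0 such that A_t ⊆ closedBall(s₀, r_t), vol(A_t) ≥ c · vol(closedBall(s₀, r_t)) for all t, and vol(A_t) → 0 as t → ∞, one has (∫_{A_t} f(z̃₀, u) du) / (∫_{A_t} m(u) du) → f(z̃₀, s₀) / m(s₀). -/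
/-!
At a Lebesgue point `s` of a locally integrable `g`, the average of `g` over a set
`A ⊆ closedBall s r` with `μ A ≥ c μ (closedBall s r)` differs from `g s` by at most `c⁻¹` times
the mean oscillation of `g` on that ball, so it tends to `g s` as `μ A → 0`; the theorem follows by
applying this to `f z̃` and to `m` and dividing. By Lebesgue differentiation almost every `s` is
a Lebesgue point of `m`, and almost every pair `(z̃, s)` is one of `f z̃`: for the latter, Fubini
needs the set of such pairs to be measurable, which holds because the Lebesgue point property may
be tested along dyadic radii. Finally `m s = 0` forces `ρ (z̃, θ, s) = 0` for almost every
`(z̃, θ)`, so `m ≠ 0` almost everywhere for the measure with density `ρ`.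
-/

open MeasureTheory Filter Metric Topology Module

section Average

variable {α F : Type*} [MeasurableSpace α] {μ : Measure α}
  [NormedAddCommGroup F] [NormedSpace ℝ F] [CompleteSpace F]

lemma setAverage_sub_const {A : Set α} {g : α → F} (hg : IntegrableOn g A μ)
    (hA₀ : μ A ≠ 0) (hA : μ A ≠ ⊤) (a : F) :
    ⨍ y in A, g y ∂μ - a = ⨍ y in A, (g y - a) ∂μ := by
  rw [setAverage_eq, setAverage_eq, integral_sub hg (integrableOn_const hA), setIntegral_const,
    smul_sub, smul_smul, inv_mul_cancel₀ (measureReal_ne_zero_iff hA |>.2 hA₀), one_smul]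

lemma norm_setAverage_sub_le_of_subset {A B : Set α} {g : α → F} (a : F) {c : ℝ} (hc : 0 < c)
    (hg : IntegrableOn g B μ) (hAB : A ⊆ B) (hB : μ B ≠ ⊤) (hA₀ : μ A ≠ 0)
    (hvol : ENNReal.ofReal c * μ B ≤ μ A) :
    ‖⨍ y in A, g y ∂μ - a‖ ≤ c⁻¹ * ⨍ y in B, ‖g y - a‖ ∂μ := by
  have hA : μ A ≠ ⊤ := ne_top_of_le_ne_top hB (measure_mono hAB)
  have hAr : 0 < μ.real A := ENNReal.toReal_pos hA₀ hA
  have hBr : 0 < μ.real B := hAr.trans_le (measureReal_mono hAB hB)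
  have hcB : c * μ.real B ≤ μ.real A := by
    simpa [measureReal_def, ENNReal.toReal_mul, hc.le] using ENNReal.toReal_mono hA hvol
  have hI : ∫ y in A, ‖g y - a‖ ∂μ ≤ ∫ y in B, ‖g y - a‖ ∂μ :=
    setIntegral_mono_set (hg.sub (integrableOn_const hB)).norm
      (ae_of_all _ fun _ => norm_nonneg _) hAB.eventuallyLE
  rw [setAverage_sub_const (hg.mono_set hAB) hA₀ hA, setAverage_eq, setAverage_eq, norm_smul,
    Real.norm_of_nonneg (inv_nonneg.2 hAr.le), smul_eq_mul]
  calc (μ.real A)⁻¹ * ‖∫ y in A, (g y - a) ∂μ‖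
      ≤ (μ.real A)⁻¹ * ∫ y in B, ‖g y - a‖ ∂μ := by
        gcongr; exact (norm_integral_le_integral_norm _).trans hI
    _ ≤ (c * μ.real B)⁻¹ * ∫ y in B, ‖g y - a‖ ∂μ := by gcongr
    _ = c⁻¹ * ((μ.real B)⁻¹ * ∫ y in B, ‖g y - a‖ ∂μ) := by rw [mul_inv, mul_assoc]

lemma setAverage_div_setAverage {A : Set α} (hA₀ : μ A ≠ 0) (hA : μ A ≠ ⊤) (g₁ g₂ : α → ℝ) :
    (⨍ y in A, g₁ y ∂μ) / ⨍ y in A, g₂ y ∂μ = (∫ y in A, g₁ y ∂μ) / ∫ y in A, g₂ y ∂μ := by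
  rw [setAverage_eq, setAverage_eq, smul_eq_mul, smul_eq_mul,
    mul_div_mul_left _ _ (inv_ne_zero (measureReal_ne_zero_iff hA |>.2 hA₀))]

end Average

section LebesguePoint

variable {X F : Type*} [PseudoMetricSpace X] [MeasurableSpace X] {μ : Measure X}
  [NormedAddCommGroup F]

def IsLebesguePoint (μ : Measure X) (g : X → F) (s : X) : Prop :=
  Tendsto (fun r => ⨍ y in closedBall s r, ‖g y - g s‖ ∂μ) (𝓝[>] 0) (𝓝 0)

lemma ae_isLebesguePoint [IsUnifLocDoublingMeasure μ] [SecondCountableTopology X] [BorelSpace X]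
    [IsLocallyFiniteMeasure μ] {g : X → F} (hg : LocallyIntegrable g μ) :
    ∀ᵐ s ∂μ, IsLebesguePoint μ g s := by
  filter_upwards [IsUnifLocDoublingMeasure.ae_tendsto_average_norm_sub μ hg 1] with s hs
  refine hs (fun _ => s) id tendsto_id ?_
  filter_upwards [self_mem_nhdsWithin] with r (hr : 0 < r)
  exact mem_closedBall_self (by simpa using hr.le)

variable [μ.IsOpenPosMeasure] {ι : Type*} {l : Filter ι} {A : ι → Set X} {r : ι → ℝ} {s : X}
  {c : ℝ}

lemma tendsto_nhdsGT_zero_of_measure_tendsto_zero (hc : 0 < c) (hr : ∀ t, 0 < r t)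
    (hvol : ∀ t, ENNReal.ofReal c * μ (closedBall s (r t)) ≤ μ (A t))
    (hA : Tendsto (fun t => μ (A t)) l (𝓝 0)) : Tendsto r l (𝓝[>] 0) := by
  have hc' : ENNReal.ofReal c ≠ 0 := (ENNReal.ofReal_pos.2 hc).ne'
  have hball : Tendsto (fun t => μ (closedBall s (r t))) l (𝓝 0) := by
    have hA' := ENNReal.Tendsto.div_const hA (Or.inr hc')
    rw [ENNReal.zero_div] at hA'
    refine tendsto_of_tendsto_of_tendsto_of_le_of_le tendsto_const_nhds hA' (fun _ => zero_le)
      fun t => ?_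
    rw [ENNReal.le_div_iff_mul_le (Or.inl hc') (Or.inl ENNReal.ofReal_ne_top), mul_comm]
    exact hvol t
  refine tendsto_nhdsWithin_iff.2 ⟨tendsto_order.2 ⟨fun a ha => .of_forall fun t =>
    ha.trans (hr t), fun b hb => ?_⟩, .of_forall hr⟩
  filter_upwards [hball.eventually_lt_const (measure_closedBall_pos μ s hb)] with t ht
  by_contra! h
  exact ht.not_ge (measure_mono (closedBall_subset_closedBall h))

lemma measure_ne_zero_of_ofReal_mul_measure_closedBall_le (hc : 0 < c) {R : ℝ} (hR : 0 < R)
    {B : Set X} (hvol : ENNReal.ofReal c * μ (closedBall s R) ≤ μ B) : μ B ≠ 0 :=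
  ((ENNReal.mul_pos (ENNReal.ofReal_pos.2 hc).ne' (measure_closedBall_pos μ s hR).ne').trans_le
    hvol).ne'

variable [ProperSpace X] [IsFiniteMeasureOnCompacts μ]

lemma IsLebesguePoint.tendsto_setAverage [NormedSpace ℝ F] [CompleteSpace F] {g : X → F}
    (hs : IsLebesguePoint μ g s) (hg : LocallyIntegrable g μ) (hc : 0 < c) (hr : ∀ t, 0 < r t)
    (hsub : ∀ t, A t ⊆ closedBall s (r t))
    (hvol : ∀ t, ENNReal.ofReal c * μ (closedBall s (r t)) ≤ μ (A t))
    (hA : Tendsto (fun t => μ (A t)) l (𝓝 0)) :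
    Tendsto (fun t => ⨍ y in A t, g y ∂μ) l (𝓝 (g s)) := by
  have hosc := (hs.comp (tendsto_nhdsGT_zero_of_measure_tendsto_zero hc hr hvol hA)).const_mul c⁻¹
  rw [mul_zero] at hosc
  refine tendsto_iff_norm_sub_tendsto_zero.2
    (squeeze_zero (fun _ => norm_nonneg _) (fun t => ?_) hosc)
  exact norm_setAverage_sub_le_of_subset (g s) hc
    (hg.integrableOn_isCompact (isCompact_closedBall _ _)) (hsub t) measure_closedBall_lt_top.ne
    (measure_ne_zero_of_ofReal_mul_measure_closedBall_le hc (hr t) (hvol t)) (hvol t)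

lemma tendsto_setIntegral_div_setIntegral {g₁ g₂ : X → ℝ} (hs₁ : IsLebesguePoint μ g₁ s)
    (hs₂ : IsLebesguePoint μ g₂ s) (hg₁ : LocallyIntegrable g₁ μ) (hg₂ : LocallyIntegrable g₂ μ)
    (hs : g₂ s ≠ 0) (hc : 0 < c) (hr : ∀ t, 0 < r t) (hsub : ∀ t, A t ⊆ closedBall s (r t))
    (hvol : ∀ t, ENNReal.ofReal c * μ (closedBall s (r t)) ≤ μ (A t))
    (hA : Tendsto (fun t => μ (A t)) l (𝓝 0)) :
    Tendsto (fun t => (∫ y in A t, g₁ y ∂μ) / ∫ y in A t, g₂ y ∂μ) l (𝓝 (g₁ s / g₂ s)) := by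
  refine ((hs₁.tendsto_setAverage hg₁ hc hr hsub hvol hA).div
    (hs₂.tendsto_setAverage hg₂ hc hr hsub hvol hA) hs).congr fun t => ?_
  exact setAverage_div_setAverage
    (measure_ne_zero_of_ofReal_mul_measure_closedBall_le hc (hr t) (hvol t))
    (ne_top_of_le_ne_top measure_closedBall_lt_top.ne (measure_mono (hsub t))) g₁ g₂

end LebesguePoint

section Dyadic

variable {E F : Type*} [NormedAddCommGroup E] [NormedSpace ℝ E] [FiniteDimensional ℝ E]
  [MeasurableSpace E] [BorelSpace E] {μ : Measure E} [μ.IsAddHaarMeasure] [NormedAddCommGroup F]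

lemma setAverage_closedBall_le_mul {h : E → ℝ} (h₀ : ∀ y, 0 ≤ h y) {s : E} {r R : ℝ}
    (hint : IntegrableOn h (closedBall s R) μ) (hr : 0 < r) (hrR : r ≤ R) :
    ⨍ y in closedBall s r, h y ∂μ ≤ (R / r) ^ finrank ℝ E * ⨍ y in closedBall s R, h y ∂μ := by
  have hV : 0 < μ.real (ball (0 : E) 1) :=
    ENNReal.toReal_pos (measure_ball_pos μ _ one_pos).ne' measure_ball_lt_top.ne
  have hI : ∫ y in closedBall s r, h y ∂μ ≤ ∫ y in closedBall s R, h y ∂μ :=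
    setIntegral_mono_set hint (ae_of_all _ h₀) (closedBall_subset_closedBall hrR).eventuallyLE
  have hR : 0 < R := hr.trans_le hrR
  rw [setAverage_eq, setAverage_eq, smul_eq_mul, smul_eq_mul,
    Measure.addHaar_real_closedBall μ s hr.le, Measure.addHaar_real_closedBall μ s hR.le]
  calc (r ^ finrank ℝ E * μ.real (ball 0 1))⁻¹ * ∫ y in closedBall s r, h y ∂μ
      ≤ (r ^ finrank ℝ E * μ.real (ball 0 1))⁻¹ * ∫ y in closedBall s R, h y ∂μ := by gcongr
    _ = _ := by rw [div_pow]; field_simp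

lemma isLebesguePoint_iff_tendsto_dyadic {g : E → F} (hg : LocallyIntegrable g μ) {s : E} :
    IsLebesguePoint μ g s ↔
      Tendsto (fun n : ℕ => ⨍ y in closedBall s (2 ^ n)⁻¹, ‖g y - g s‖ ∂μ) atTop (𝓝 0) := by
  refine ⟨fun hs => hs.comp (tendsto_inv_atTop_nhdsGT_zero.comp
    (tendsto_pow_atTop_atTop_of_one_lt one_lt_two)), fun hdy => ?_⟩
  have h₀ (r : ℝ) : 0 ≤ ⨍ y in closedBall s r, ‖g y - g s‖ ∂μ := by
    rw [setAverage_eq, smul_eq_mul]; positivity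
  refine tendsto_order.2 ⟨fun a ha => .of_forall fun r => ha.trans_le (h₀ r), fun b hb => ?_⟩
  obtain ⟨N, hN⟩ := eventually_atTop.1
    (hdy.eventually_lt_const (div_pos hb (pow_pos two_pos (finrank ℝ E))))
  filter_upwards [Ioo_mem_nhdsGT (inv_pos.2 (pow_pos two_pos N))] with r ⟨hr, hrN⟩
  have hr₁ : 1 ≤ r⁻¹ :=
    (one_le_inv₀ hr).2 (hrN.le.trans (inv_le_one_of_one_le₀ (one_le_pow₀ one_le_two)))
  -- the dyadic radius `R = 2⁻ⁿ` with `r ≤ R < 2 r`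
  obtain ⟨n, hn, hn'⟩ := exists_nat_pow_near hr₁ one_lt_two
  have hNn : N ≤ n := by
    have : (2 : ℝ) ^ N < 2 ^ (n + 1) := ((lt_inv_comm₀ hr (pow_pos two_pos N)).1 hrN).trans hn'
    have := (pow_lt_pow_iff_right₀ one_lt_two).1 this
    omega
  have hrR : r ≤ (2 ^ n)⁻¹ := (le_inv_comm₀ (pow_pos two_pos n) hr).1 hn
  have hRr : (2 ^ n)⁻¹ / r ≤ 2 := by
    have h1 := (inv_lt_iff_one_lt_mul₀' hr).1 hn'
    rw [div_le_iff₀ hr, inv_le_iff_one_le_mul₀' (pow_pos two_pos n)]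
    rw [pow_succ] at h1
    linarith
  calc ⨍ y in closedBall s r, ‖g y - g s‖ ∂μ
      ≤ ((2 ^ n)⁻¹ / r) ^ finrank ℝ E * ⨍ y in closedBall s (2 ^ n)⁻¹, ‖g y - g s‖ ∂μ :=
        setAverage_closedBall_le_mul (fun _ => norm_nonneg _)
          ((hg.integrableOn_isCompact (isCompact_closedBall _ _)).sub
            (integrableOn_const measure_closedBall_lt_top.ne)).norm hr hrR
    _ ≤ 2 ^ finrank ℝ E * ⨍ y in closedBall s (2 ^ n)⁻¹, ‖g y - g s‖ ∂μ := by
        gcongr; exact h₀ _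
    _ < b := (lt_div_iff₀' (pow_pos two_pos _)).1 (hN n hNn)

variable {α : Type*} [MeasurableSpace α] [MeasurableSpace F] [BorelSpace F]
  [SecondCountableTopology F]

lemma measurableSet_tendsto_dyadic {G : α × E → F} (hG : Measurable G) :
    MeasurableSet {p : α × E | Tendsto (fun n : ℕ =>
      ⨍ y in closedBall p.2 (2 ^ n)⁻¹, ‖G (p.1, y) - G (p.1, p.2)‖ ∂μ) atTop (𝓝 0)} := by
  refine measurableSet_tendsto _ fun n => ?_
  set R : ℝ := (2 ^ n)⁻¹
  have hmeas : Measurable fun q : (α × E) × E =>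
      if dist q.2 q.1.2 ≤ R then ‖G (q.1.1, q.2) - G q.1‖ else 0 :=
    Measurable.ite (measurableSet_le (by fun_prop) measurable_const)
      ((hG.comp (by fun_prop)).sub (hG.comp measurable_fst)).norm measurable_const
  have hav : (fun p : α × E => ⨍ y in closedBall p.2 R, ‖G (p.1, y) - G (p.1, p.2)‖ ∂μ) =
      fun p => (μ.real (closedBall (0 : E) R))⁻¹ *
        ∫ y, (if dist y p.2 ≤ R then ‖G (p.1, y) - G p‖ else 0) ∂μ := by
    ext p
    rw [setAverage_eq, smul_eq_mul, Measure.addHaar_real_closedBall_center μ p.2,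
      ← integral_indicator measurableSet_closedBall]
    rfl
  rw [hav]
  exact hmeas.stronglyMeasurable.integral_prod_right'.measurable.const_mul _

lemma ae_prod_isLebesguePoint {μα : Measure α} [SFinite μα] {G : α × E → F} (hG : Measurable G)
    (hint : ∀ᵐ z ∂μα, LocallyIntegrable (fun u => G (z, u)) μ) :
    ∀ᵐ p ∂μα.prod μ, IsLebesguePoint μ (fun u => G (p.1, u)) p.2 := by
  have hdyadic : ∀ᵐ p ∂μα.prod μ, Tendsto (fun n : ℕ =>
      ⨍ y in closedBall p.2 (2 ^ n)⁻¹, ‖G (p.1, y) - G (p.1, p.2)‖ ∂μ) atTop (𝓝 0) := by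
    refine (Measure.ae_prod_iff_ae_ae (measurableSet_tendsto_dyadic hG)).2 ?_
    filter_upwards [hint] with z hz
    filter_upwards [ae_isLebesguePoint hz] with s hs
    exact (isLebesguePoint_iff_tendsto_dyadic hz).1 hs
  filter_upwards [hdyadic, Measure.quasiMeasurePreserving_fst.ae hint] with p hp hz
  exact (isLebesguePoint_iff_tendsto_dyadic hz).2 hp

end Dyadic

section Fubini

variable {α β : Type*} [MeasurableSpace α] [MeasurableSpace β] {μ : Measure α} {ν : Measure β}
  [SFinite μ] [SFinite ν] {ρ : α × β → ℝ}

lemma ae_prod_eq_zero_of_integral_snd_eq_zero (hmeas : Measurable ρ)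
    (hint : Integrable ρ (μ.prod ν)) (h₀ : ∀ p, 0 ≤ ρ p) :
    ∀ᵐ p ∂μ.prod ν, ∫ y, ρ (p.1, y) ∂ν = 0 → ρ p = 0 := by
  have hset : MeasurableSet {p : α × β | ∫ y, ρ (p.1, y) ∂ν = 0 → ρ p = 0} := by
    have hI := (hmeas.stronglyMeasurable.integral_prod_right' (ν := ν)).measurable
    exact .imp (measurableSet_eq_fun (hI.comp measurable_fst) measurable_const)
      (measurableSet_eq_fun hmeas measurable_const)
  rw [Measure.ae_prod_iff_ae_ae hset]
  filter_upwards [hint.prod_right_ae] with x hx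
  exact eventually_imp_distrib_left.2 (integral_eq_zero_iff_of_nonneg (fun y => h₀ _) hx).1

lemma ae_prod_eq_zero_of_integral_fst_eq_zero (hmeas : Measurable ρ)
    (hint : Integrable ρ (μ.prod ν)) (h₀ : ∀ p, 0 ≤ ρ p) :
    ∀ᵐ p ∂μ.prod ν, ∫ x, ρ (x, p.2) ∂μ = 0 → ρ p = 0 := by
  have hset : MeasurableSet {p : α × β | ∫ x, ρ (x, p.2) ∂μ = 0 → ρ p = 0} := by
    have hI := (hmeas.stronglyMeasurable.integral_prod_left' (μ := μ)).measurable
    exact .imp (measurableSet_eq_fun (hI.comp measurable_snd) measurable_const)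
      (measurableSet_eq_fun hmeas measurable_const)
  rw [Measure.ae_prod_iff_ae_ae hset, Measure.ae_ae_comm hset]
  filter_upwards [hint.prod_left_ae] with y hy
  exact eventually_imp_distrib_left.2 (integral_eq_zero_iff_of_nonneg (fun x => h₀ _) hy).1

end Fubini

section Marginal

variable {α β E : Type*} [MeasurableSpace α] [MeasurableSpace β] {μα : Measure α}
  {μβ : Measure β} [SFinite μα] [SFinite μβ] [NormedAddCommGroup E] [NormedSpace ℝ E]
  [FiniteDimensional ℝ E] [MeasurableSpace E] [BorelSpace E] {μ : Measure E} [μ.IsAddHaarMeasure]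

lemma ae_tendsto_setIntegral_div_setIntegral_marginal {ρ : (α × E) × β → ℝ}
    (hmeas : Measurable ρ) (hint : Integrable ρ ((μα.prod μ).prod μβ)) (h₀ : ∀ w, 0 ≤ ρ w)
    {f : α → E → ℝ} (hf : ∀ z u, f z u = ∫ y, ρ ((z, u), y) ∂μβ)
    {m : E → ℝ} (hm : ∀ u, m u = ∫ z, f z u ∂μα) :
    ∀ᵐ w ∂(μα.prod μ).prod μβ, ρ w ≠ 0 → ∀ {ι : Type*} {l : Filter ι} {c : ℝ} (A : ι → Set E)
      (r : ι → ℝ), 0 < c → (∀ t, 0 < r t) → (∀ t, A t ⊆ closedBall w.1.2 (r t)) →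
      (∀ t, ENNReal.ofReal c * μ (closedBall w.1.2 (r t)) ≤ μ (A t)) →
      Tendsto (fun t => μ (A t)) l (𝓝 0) →
      Tendsto (fun t => (∫ u in A t, f w.1.1 u ∂μ) / ∫ u in A t, m u ∂μ) l
        (𝓝 (f w.1.1 w.1.2 / m w.1.2)) := by
  have hF : Integrable (fun p : α × E => f p.1 p.2) (μα.prod μ) := by
    simpa only [hf] using hint.integral_prod_left
  have hFmeas : Measurable fun p : α × E => f p.1 p.2 := by
    simpa only [hf] using hmeas.stronglyMeasurable.integral_prod_right'.measurable
  have hF₀ (p : α × E) : 0 ≤ f p.1 p.2 := by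
    rw [hf]; exact integral_nonneg fun y => h₀ _
  have hmint : Integrable m μ := hF.integral_prod_right.congr (ae_of_all _ fun u => (hm u).symm)
  have hfst := Measure.quasiMeasurePreserving_fst (μ := μα.prod μ) (ν := μβ)
  filter_upwards [hfst.ae (ae_prod_isLebesguePoint hFmeas
      (hF.prod_right_ae.mono fun z hz => hz.locallyIntegrable)),
    (QuasiMeasurePreserving.snd hfst).ae (ae_isLebesguePoint hmint.locallyIntegrable),
    (QuasiMeasurePreserving.fst hfst).ae hF.prod_right_ae,
    ae_prod_eq_zero_of_integral_snd_eq_zero hmeas hint h₀,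
    hfst.ae (ae_prod_eq_zero_of_integral_fst_eq_zero hFmeas hF hF₀)]
    with w hfLeb hmLeb hfint hρ hf0 hρw ι l c A r hc hr hsub hvol hA
  have hmw : m w.1.2 ≠ 0 := fun h0 => hρw (hρ (by rw [← hf]; exact hf0 (by rw [← hm]; exact h0)))
  exact tendsto_setIntegral_div_setIntegral hfLeb hmLeb hfint.locallyIntegrable
    hmint.locallyIntegrable hmw hc hr hsub hvol hA

end Marginal

/-- Proposition 1 (marginal part): the ABC-P posterior predictive density converges to the
exact posterior predictive density as the acceptance regions shrink with bounded eccentricity. -/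
theorem abcP_marginal_limit {k q d : ℕ}
    (ρ : (EuclideanSpace ℝ (Fin k)) × (EuclideanSpace ℝ (Fin q)) × (EuclideanSpace ℝ (Fin d)) → ℝ)
    (hρmeas : Measurable ρ) (hρint : Integrable ρ) (hρnonneg : ∀ x, 0 ≤ ρ x)
    (c : ℝ) (hc : 0 < c)
    (f : EuclideanSpace ℝ (Fin k) → EuclideanSpace ℝ (Fin d) → ℝ)
    (hf : ∀ zt u, f zt u = ∫ θ, ρ (zt, θ, u))
    (m : EuclideanSpace ℝ (Fin d) → ℝ)
    (hm : ∀ u, m u = ∫ zt, ∫ θ, ρ (zt, θ, u)) :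
    ∀ᵐ x ∂(volume.withDensity (fun x => ENNReal.ofReal (ρ x))),
      ∀ (A : ℕ → Set (EuclideanSpace ℝ (Fin d))) (r : ℕ → ℝ),
        (∀ t, MeasurableSet (A t)) →
        (∀ t, 0 < r t) →
        (∀ t, A t ⊆ Metric.closedBall x.2.2 (r t)) →
        (∀ t, ENNReal.ofReal c * volume (Metric.closedBall x.2.2 (r t)) ≤ volume (A t)) →
        Tendsto (fun t => volume (A t)) atTop (nhds 0) →
        Tendsto (fun t => (∫ u in A t, f x.1 u) / (∫ u in A t, m u)) atTop
          (nhds (f x.1 x.2.2 / m x.2.2)) := by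
  -- reorder `(z̃, θ, s)` as `((z̃, s), θ)`, so that `f` and `m` are iterated marginals of `ρ ∘ e`
  let e : (EuclideanSpace ℝ (Fin k) × EuclideanSpace ℝ (Fin d)) × EuclideanSpace ℝ (Fin q) ≃ᵐ
      EuclideanSpace ℝ (Fin k) × EuclideanSpace ℝ (Fin q) × EuclideanSpace ℝ (Fin d) :=
    MeasurableEquiv.prodAssoc.trans (.prodCongr (.refl _) .prodComm)
  have he : MeasurePreserving e volume volume :=
    ((MeasurePreserving.id _).prod Measure.measurePreserving_swap).comp
      (measurePreserving_prodAssoc _ _ _)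
  have hm' (u : EuclideanSpace ℝ (Fin d)) : m u = ∫ z, f z u :=
    (hm u).trans (integral_congr_ae (ae_of_all _ fun z => (hf z u).symm))
  rw [ae_withDensity_iff hρmeas.ennreal_ofReal, ← he.map_eq, e.measurableEmbedding.ae_map_iff]
  filter_upwards [ae_tendsto_setIntegral_div_setIntegral_marginal (hρmeas.comp e.measurable)
    ((he.integrable_comp_emb e.measurableEmbedding).2 hρint) (fun w => hρnonneg (e w)) hf hm']
    with w hw hρw A r _ hr hsub hvol hA
  exact hw (fun h => hρw (ENNReal.ofReal_eq_zero.2 h.le)) A r hc hr hsub hvol hA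
end

section
/- Let ρ : ℝ^k × ℝ^q × ℝ^d → [0,∞) be a measurable Lebesgue-integrable function (the joint density of (z̃, θ, s_y)), and define m(u) = ∫_{ℝ^k} ∫_{ℝ^q} ρ(z̃, θ, u) dθ dz̃. Fix a constant c > 0. Then for almost every point (z̃₀, θ₀, s₀) with respect to the measure with density ρ relative to Lebesgue measure on ℝ^k × ℝ^q × ℝ^d, the following holds: for every sequence of Lebesgue-measurable sets A_t ⊆ ℝ^d and radii r_t > 0 such that A_t ⊆ closedBall(s₀, r_t), vol(A_t) ≥ c · vol(closedBall(s₀, r_t)) for all t, and vol(A_t) → 0 as t → ∞, one has (∫_{A_t} ρ(z̃₀, θ₀, u) du) / (∫_{A_t} m(u) du) → ρ(z̃₀, θ₀, s₀) / m(s₀). -/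
/-!
Fix a point `(p, s)` with `ρ (p, s) > 0`. For almost every such point, `s` is a Lebesgue point
both of the section `u ↦ ρ (p, u)` and of the marginal `m`, and `m s ≠ 0` (otherwise the
section would vanish a.e.). At a Lebesgue point `s`, the average over a set `A ⊆ B(s, r)` with
`vol B(s, r) ≤ C vol A` is within `C` times the mean oscillation over `B(s, r)` of the value at
`s`; the volume condition forces `r → 0`, so both averages converge and hence so does their
ratio, which is the ratio of the two integrals over `A`.
-/

open MeasureTheory Filter Metric Set
open scoped ENNReal Topology

theorem setLAverage_le_mul_setLAverage_of_subset {α : Type*} [MeasurableSpace α]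
    {μ : Measure α} {S T : Set α} {C : ℝ≥0∞} (f : α → ℝ≥0∞) (hST : S ⊆ T) (hT : μ T ≠ ∞)
    (hC : μ T ≤ C * μ S) :
    ⨍⁻ x in S, f x ∂μ ≤ C * ⨍⁻ x in T, f x ∂μ := by
  rcases eq_or_ne (μ S) 0 with hS | hS
  · simp [setLAverage_eq, Measure.restrict_eq_zero.2 hS]
  have hT₀ : μ T ≠ 0 := (pos_iff_ne_zero.2 hS |>.trans_le (measure_mono hST)).ne'
  rw [setLAverage_eq, setLAverage_eq]
  calc (∫⁻ x in S, f x ∂μ) / μ S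
      ≤ (∫⁻ x in T, f x ∂μ) / μ S := by gcongr
    _ = μ T / μ S * ((∫⁻ x in T, f x ∂μ) / μ T) := by
      rw [mul_comm, div_eq_mul_inv, div_eq_mul_inv, div_eq_mul_inv, mul_assoc,
        ← mul_assoc (μ T)⁻¹, ENNReal.inv_mul_cancel hT₀ hT, one_mul]
    _ ≤ C * ((∫⁻ x in T, f x ∂μ) / μ T) := by
      gcongr
      exact ENNReal.div_le_of_le_mul hC

theorem enorm_setAverage_sub_le_setLAverage {α F : Type*} [MeasurableSpace α] {μ : Measure α}
    [NormedAddCommGroup F] [NormedSpace ℝ F] [CompleteSpace F] {A : Set α} (hA₀ : μ A ≠ 0)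
    (hA : μ A ≠ ∞) {g : α → F} (hg : IntegrableOn g A μ) (c : F) :
    ‖(⨍ x in A, g x ∂μ) - c‖ₑ ≤ ⨍⁻ x in A, ‖g x - c‖ₑ ∂μ := by
  have hsub : ⨍ x in A, (g x - c) ∂μ = (⨍ x in A, g x ∂μ) - c := by
    rw [setAverage_eq, integral_sub hg (integrableOn_const hA), smul_sub, ← setAverage_eq,
      ← setAverage_eq, setAverage_const hA₀ hA]
  rw [← hsub, average_eq', laverage_eq']
  exact enorm_integral_le_lintegral_enorm _

theorem tendsto_nhdsGT_zero_of_tendsto_inv_natCast {Φ : ℝ → ℝ≥0∞} {C : ℝ≥0∞} (hC : C ≠ ∞)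
    (hΦ : ∀ ε ε', 0 < ε → ε ≤ ε' → ε' ≤ 2 * ε → Φ ε ≤ C * Φ ε')
    (h : Tendsto (fun n : ℕ => Φ (n : ℝ)⁻¹) atTop (𝓝 0)) :
    Tendsto Φ (𝓝[>] 0) (𝓝 0) := by
  have hN : Tendsto (fun ε : ℝ => ⌊ε⁻¹⌋₊) (𝓝[>] 0) atTop :=
    tendsto_nat_floor_atTop.comp tendsto_inv_nhdsGT_zero
  have hlim : Tendsto (fun ε : ℝ => C * Φ (⌊ε⁻¹⌋₊ : ℝ)⁻¹) (𝓝[>] 0) (𝓝 0) := by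
    simpa using ENNReal.Tendsto.const_mul (h.comp hN) (Or.inr hC)
  refine tendsto_of_tendsto_of_tendsto_of_le_of_le' tendsto_const_nhds hlim
    (Eventually.of_forall fun _ => zero_le) ?_
  have hsmall : ∀ᶠ ε in 𝓝[>] (0 : ℝ), ε < 1 / 2 :=
    nhdsWithin_le_nhds (eventually_lt_nhds (by norm_num))
  filter_upwards [self_mem_nhdsWithin, hsmall] with ε (hε : 0 < ε) hε₂
  have h2 : 2 ≤ ε⁻¹ := by rw [le_inv_comm₀ two_pos hε]; linarith
  have hfloor_le : (⌊ε⁻¹⌋₊ : ℝ) ≤ ε⁻¹ := Nat.floor_le (by positivity)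
  have hlt_floor : ε⁻¹ < ⌊ε⁻¹⌋₊ + 1 := Nat.lt_floor_add_one _
  have hpos : (0 : ℝ) < ⌊ε⁻¹⌋₊ := by linarith
  apply hΦ _ _ hε
  · rw [le_inv_comm₀ hε hpos]
    exact hfloor_le
  · rw [inv_le_iff_one_le_mul₀ hpos]
    have : 1 < ε * (⌊ε⁻¹⌋₊ + 1) := by rwa [← div_lt_iff₀' hε, one_div]
    nlinarith

section MetricMeasure

variable {α : Type*} [PseudoMetricSpace α] [MeasurableSpace α] {μ : Measure α}
  [μ.IsOpenPosMeasure] {ι : Type*} {l : Filter ι} {A : ι → Set α} {r : ι → ℝ} {s : α}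
  {C : ℝ≥0∞}

theorem measure_pos_of_measure_closedBall_le_mul {S : Set α} {ε : ℝ} (hε : 0 < ε)
    (h : μ (closedBall s ε) ≤ C * μ S) : 0 < μ S := by
  refine pos_iff_ne_zero.2 fun hS => ?_
  have := (measure_closedBall_pos μ s hε).trans_le h
  simp [hS] at this

theorem tendsto_nhdsGT_zero_of_tendsto_measure (hC : C ≠ ∞) (hr : ∀ t, 0 < r t)
    (hAC : ∀ t, μ (closedBall s (r t)) ≤ C * μ (A t))
    (hA : Tendsto (fun t => μ (A t)) l (𝓝 0)) :
    Tendsto r l (𝓝[>] 0) := by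
  have hball : Tendsto (fun t => μ (closedBall s (r t))) l (𝓝 0) := by
    refine tendsto_of_tendsto_of_tendsto_of_le_of_le tendsto_const_nhds ?_
      (fun _ => zero_le) hAC
    simpa using ENNReal.Tendsto.const_mul hA (Or.inr hC)
  refine tendsto_nhdsWithin_iff.2 ⟨?_, Eventually.of_forall hr⟩
  refine tendsto_order.2
    ⟨fun a ha => Eventually.of_forall fun t => ha.trans (hr t), fun δ hδ => ?_⟩
  filter_upwards [hball.eventually (gt_mem_nhds (measure_closedBall_pos μ s hδ))] with t ht
  by_contra! hδr
  exact (measure_mono (closedBall_subset_closedBall hδr)).not_gt ht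

theorem tendsto_setAverage_of_subset_closedBall [ProperSpace α] [IsFiniteMeasureOnCompacts μ]
    {F : Type*} [NormedAddCommGroup F] [NormedSpace ℝ F] [CompleteSpace F] {g : α → F}
    (hg : LocallyIntegrable g μ)
    (hs : Tendsto (fun ε => ⨍⁻ y in closedBall s ε, ‖g y - g s‖ₑ ∂μ) (𝓝[>] 0) (𝓝 0))
    (hC : C ≠ ∞) (hr : Tendsto r l (𝓝[>] 0)) (hAr : ∀ t, A t ⊆ closedBall s (r t))
    (hAC : ∀ t, μ (closedBall s (r t)) ≤ C * μ (A t)) :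
    Tendsto (fun t => ⨍ y in A t, g y ∂μ) l (𝓝 (g s)) := by
  rw [tendsto_iff_edist_tendsto_0]
  refine tendsto_of_tendsto_of_tendsto_of_le_of_le' tendsto_const_nhds
    (by simpa using ENNReal.Tendsto.const_mul (hs.comp hr) (Or.inr hC))
    (Eventually.of_forall fun _ => zero_le) ?_
  filter_upwards [hr self_mem_nhdsWithin] with t (ht : 0 < r t)
  have hB : μ (closedBall s (r t)) ≠ ∞ := measure_closedBall_lt_top.ne
  rw [edist_eq_enorm_sub]
  calc ‖(⨍ y in A t, g y ∂μ) - g s‖ₑ ≤ ⨍⁻ y in A t, ‖g y - g s‖ₑ ∂μ :=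
        enorm_setAverage_sub_le_setLAverage
          (measure_pos_of_measure_closedBall_le_mul ht (hAC t)).ne'
          (ne_top_of_le_ne_top hB (measure_mono (hAr t)))
          ((hg.integrableOn_isCompact (isCompact_closedBall s (r t))).mono_set (hAr t)) _
    _ ≤ C * ⨍⁻ y in closedBall s (r t), ‖g y - g s‖ₑ ∂μ :=
        setLAverage_le_mul_setLAverage_of_subset _ (hAr t) hB (hAC t)

end MetricMeasure

theorem ae_integral_ne_zero_of_pos {P Y : Type*} [MeasurableSpace P] [MeasurableSpace Y]
    {ν : Measure P} {μ : Measure Y} [SFinite ν] [SFinite μ] {f : P × Y → ℝ} (hf : Measurable f)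
    (hfi : Integrable f (ν.prod μ)) (hf₀ : 0 ≤ f) :
    ∀ᵐ w ∂ν.prod μ, 0 < f w → ∫ p, f (p, w.2) ∂ν ≠ 0 := by
  have hmeas : MeasurableSet {w : P × Y | 0 < f w → ∫ p, f (p, w.2) ∂ν ≠ 0} :=
    (measurableSet_lt measurable_const hf).imp
      ((hf.stronglyMeasurable.integral_prod_left'.measurable.comp measurable_snd)
        (measurableSet_singleton 0).compl)
  refine (Measure.ae_prod_iff_ae_ae hmeas).2 ((Measure.ae_ae_comm hmeas).2 ?_)
  filter_upwards [hfi.prod_left_ae] with y hy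
  by_cases hM : ∫ p, f (p, y) ∂ν = 0
  · filter_upwards [(integral_eq_zero_iff_of_nonneg (f := fun p => f (p, y))
      (fun p => hf₀ _) hy).1 hM] with p hp hpos
    exact absurd hp hpos.ne'
  · exact Eventually.of_forall fun _ _ => hM

section AddHaar

variable {E : Type*} [NormedAddCommGroup E] [NormedSpace ℝ E] [FiniteDimensional ℝ E]
  [MeasurableSpace E] [BorelSpace E] {μ : Measure E} [μ.IsAddHaarMeasure]

theorem measure_closedBall_le_two_pow_mul (s : E) {ε ε' : ℝ} (hε : 0 ≤ ε) (h : ε' ≤ 2 * ε) :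
    μ (closedBall s ε') ≤ 2 ^ Module.finrank ℝ E * μ (closedBall s ε) := by
  calc μ (closedBall s ε') ≤ μ (closedBall s (2 * ε)) :=
        measure_mono (closedBall_subset_closedBall h)
    _ = 2 ^ Module.finrank ℝ E * μ (closedBall s ε) := by
      rw [Measure.addHaar_closedBall_mul μ s zero_le_two hε,
        Measure.addHaar_closedBall_center μ s, ENNReal.ofReal_pow zero_le_two,
        ENNReal.ofReal_ofNat]

theorem ae_tendsto_setLAverage_closedBall {F : Type*} [NormedAddCommGroup F] {g : E → F}
    (hg : LocallyIntegrable g μ) :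
    ∀ᵐ s ∂μ, Tendsto (fun ε => ⨍⁻ y in closedBall s ε, ‖g y - g s‖ₑ ∂μ) (𝓝[>] 0) (𝓝 0) := by
  filter_upwards
    [(IsUnifLocDoublingMeasure.vitaliFamily μ 1).ae_tendsto_lintegral_enorm_sub_div hg] with s hs
  have hballs := IsUnifLocDoublingMeasure.tendsto_closedBall_filterAt μ (K := 1) (x := s)
    (fun _ => s) id tendsto_id
    (eventually_mem_nhdsWithin.mono fun ε (hε : 0 < ε) => by simp [hε.le])
  simp_rw [setLAverage_eq]
  exact hs.comp hballs

theorem measurable_setLAverage_closedBall {X : Type*} [MeasurableSpace X] {G : X × E → ℝ≥0∞}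
    (hG : Measurable G) {c : X → E} (hc : Measurable c) (ε : ℝ) :
    Measurable fun x => ⨍⁻ y in closedBall (c x) ε, G (x, y) ∂μ := by
  have hball : MeasurableSet {q : X × E | q.2 ∈ closedBall (c q.1) ε} :=
    measurableSet_le (measurable_snd.dist (hc.comp measurable_fst)) measurable_const
  have hnum : Measurable fun x => ∫⁻ y in closedBall (c x) ε, G (x, y) ∂μ := by
    simp_rw [← lintegral_indicator measurableSet_closedBall]
    exact (hG.indicator hball).lintegral_prod_right'
  simp_rw [setLAverage_eq, Measure.addHaar_closedBall_center μ _ ε]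
  exact hnum.div_const _

theorem tendsto_setLAverage_closedBall_of_tendsto_inv_natCast {s : E} {G : E → ℝ≥0∞}
    (h : Tendsto (fun n : ℕ => ⨍⁻ y in closedBall s (n : ℝ)⁻¹, G y ∂μ) atTop (𝓝 0)) :
    Tendsto (fun ε => ⨍⁻ y in closedBall s ε, G y ∂μ) (𝓝[>] 0) (𝓝 0) := by
  refine tendsto_nhdsGT_zero_of_tendsto_inv_natCast (C := 2 ^ Module.finrank ℝ E) (by simp)
    (fun ε ε' hε hεε' hε' => ?_) h
  exact setLAverage_le_mul_setLAverage_of_subset G (closedBall_subset_closedBall hεε')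
    measure_closedBall_lt_top.ne (measure_closedBall_le_two_pow_mul s hε.le hε')

theorem ae_prod_tendsto_setLAverage_closedBall {P : Type*} [MeasurableSpace P] {ν : Measure P}
    [SFinite ν] {f : P × E → ℝ} (hf : Measurable f)
    (hfi : ∀ᵐ p ∂ν, LocallyIntegrable (fun y => f (p, y)) μ) :
    ∀ᵐ w ∂ν.prod μ,
      Tendsto (fun ε => ⨍⁻ y in closedBall w.2 ε, ‖f (w.1, y) - f w‖ₑ ∂μ) (𝓝[>] 0) (𝓝 0) := by
  -- Fubini needs a measurable set of good points; testing only the radii `1 / n` gives one.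
  set S := {w : P × E | Tendsto
    (fun n : ℕ => ⨍⁻ y in closedBall w.2 (n : ℝ)⁻¹, ‖f (w.1, y) - f w‖ₑ ∂μ) atTop (𝓝 0)}
  have hS : MeasurableSet S := measurableSet_tendsto (𝓝 0) fun n =>
    measurable_setLAverage_closedBall
      (((hf.comp (measurable_fst.fst.prodMk measurable_snd)).sub (hf.comp measurable_fst)).enorm)
      measurable_snd _
  have hae : ∀ᵐ w ∂ν.prod μ, w ∈ S := by
    refine (Measure.ae_prod_iff_ae_ae hS).2 ?_
    filter_upwards [hfi] with p hp
    filter_upwards [ae_tendsto_setLAverage_closedBall hp] with s hs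
    exact hs.comp (tendsto_inv_atTop_nhdsGT_zero.comp tendsto_natCast_atTop_atTop)
  filter_upwards [hae] with w hw
  exact tendsto_setLAverage_closedBall_of_tendsto_inv_natCast hw

theorem ae_tendsto_setIntegral_div_setIntegral {P : Type*} [MeasurableSpace P]
    {ν : Measure P} [SFinite ν] {f : P × E → ℝ} (hf : Measurable f)
    (hfi : Integrable f (ν.prod μ)) (hf₀ : 0 ≤ f) {m : E → ℝ}
    (hm : ∀ᵐ u ∂μ, m u = ∫ p, f (p, u) ∂ν) {ι : Type*} (l : Filter ι) :
    ∀ᵐ w ∂ν.prod μ, 0 < f w → ∀ (A : ι → Set E) (r : ι → ℝ) (C : ℝ≥0∞), C ≠ ∞ →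
      Tendsto r l (𝓝[>] 0) → (∀ t, A t ⊆ closedBall w.2 (r t)) →
      (∀ t, μ (closedBall w.2 (r t)) ≤ C * μ (A t)) →
      Tendsto (fun t => (∫ u in A t, f (w.1, u) ∂μ) / ∫ u in A t, m u ∂μ) l
        (𝓝 (f w / m w.2)) := by
  have hmi : Integrable m μ := hfi.integral_prod_right.congr (hm.mono fun _ h => h.symm)
  filter_upwards [Measure.quasiMeasurePreserving_fst.ae hfi.prod_right_ae,
    ae_prod_tendsto_setLAverage_closedBall hf
      (hfi.prod_right_ae.mono fun _ h => h.locallyIntegrable),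
    Measure.quasiMeasurePreserving_snd.ae
      (ae_tendsto_setLAverage_closedBall hmi.locallyIntegrable),
    Measure.quasiMeasurePreserving_snd.ae hm, ae_integral_ne_zero_of_pos hf hfi hf₀]
    with w hsec hleb hlebm hmw hne hpos A r C hC hr hAr hAC
  have hlim :=
    (tendsto_setAverage_of_subset_closedBall hsec.locallyIntegrable hleb hC hr hAr hAC).div
      (tendsto_setAverage_of_subset_closedBall hmi.locallyIntegrable hlebm hC hr hAr hAC)
      (hmw ▸ hne hpos)
  refine hlim.congr' ?_
  filter_upwards [hr self_mem_nhdsWithin] with t (ht : 0 < r t)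
  have hA : μ.real (A t) ≠ 0 := ENNReal.toReal_ne_zero.2
    ⟨(measure_pos_of_measure_closedBall_le_mul ht (hAC t)).ne',
      ne_top_of_le_ne_top measure_closedBall_lt_top.ne (measure_mono (hAr t))⟩
  simp only [Pi.div_apply, setAverage_eq, smul_eq_mul, mul_div_mul_left _ _ (inv_ne_zero hA)]

end AddHaar

/-- Proposition 1 (joint part): the joint ABC-P density converges to the exact joint
posterior density as the acceptance regions shrink with bounded eccentricity. -/
theorem abcP_joint_limit {k q d : ℕ}
    (ρ : (EuclideanSpace ℝ (Fin k)) × (EuclideanSpace ℝ (Fin q)) × (EuclideanSpace ℝ (Fin d)) → ℝ)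
    (hρmeas : Measurable ρ) (hρint : Integrable ρ) (hρnonneg : ∀ x, 0 ≤ ρ x)
    (c : ℝ) (hc : 0 < c)
    (m : EuclideanSpace ℝ (Fin d) → ℝ)
    (hm : ∀ u, m u = ∫ zt, ∫ θ, ρ (zt, θ, u)) :
    ∀ᵐ x ∂(volume.withDensity (fun x => ENNReal.ofReal (ρ x))),
      ∀ (A : ℕ → Set (EuclideanSpace ℝ (Fin d))) (r : ℕ → ℝ),
        (∀ t, MeasurableSet (A t)) →
        (∀ t, 0 < r t) →
        (∀ t, A t ⊆ Metric.closedBall x.2.2 (r t)) →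
        (∀ t, ENNReal.ofReal c * volume (Metric.closedBall x.2.2 (r t)) ≤ volume (A t)) →
        Tendsto (fun t => volume (A t)) atTop (nhds 0) →
        Tendsto (fun t => (∫ u in A t, ρ (x.1, x.2.1, u)) / (∫ u in A t, m u)) atTop
          (nhds (ρ (x.1, x.2.1, x.2.2) / m x.2.2)) := by
  have hassoc := measurePreserving_prodAssoc (volume : Measure (EuclideanSpace ℝ (Fin k)))
    (volume : Measure (EuclideanSpace ℝ (Fin q))) (volume : Measure (EuclideanSpace ℝ (Fin d)))
  have hfi : Integrable (ρ ∘ MeasurableEquiv.prodAssoc) ((volume.prod volume).prod volume) :=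
    (hassoc.integrable_comp hρmeas.aestronglyMeasurable).2 hρint
  have hm' : ∀ᵐ u, m u = ∫ p, ρ (MeasurableEquiv.prodAssoc (p, u)) ∂(volume.prod volume) := by
    filter_upwards [hfi.prod_left_ae] with u hu
    rw [hm u]
    exact (integral_prod _ hu).symm
  have hkey := hassoc.symm.quasiMeasurePreserving.ae
    (ae_tendsto_setIntegral_div_setIntegral (hρmeas.comp MeasurableEquiv.prodAssoc.measurable)
      hfi (fun _ => hρnonneg _) hm' (atTop : Filter ℕ))
  rw [ae_withDensity_iff hρmeas.ennreal_ofReal]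
  filter_upwards [hkey] with x hx hρx A r _ hr hAr hAc hA
  have hc' : ENNReal.ofReal c ≠ 0 := by simpa using hc
  have hCtop : (ENNReal.ofReal c)⁻¹ ≠ ∞ := ENNReal.inv_ne_top.2 hc'
  have hAC : ∀ t, volume (closedBall x.2.2 (r t)) ≤ (ENNReal.ofReal c)⁻¹ * volume (A t) :=
    fun t => (ENNReal.mul_le_iff_le_inv hc' ENNReal.ofReal_ne_top).1 (hAc t)
  exact hx (ENNReal.ofReal_pos.1 (pos_iff_ne_zero.2 hρx)) A r _ hCtop
    (tendsto_nhdsGT_zero_of_tendsto_measure hCtop hr hAC hA) hAr hAC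
end

section
/- Let (Ω, 𝓕, P) be a probability space and let (ε_t)_{t≥1} be an independent family of square-integrable real random variables with E[ε_t] = 0 and Var(ε_t) = σ² for all t. Let c, φ ∈ ℝ, define random variables y_t by y_0 = 0 and y_t = c + φ·y_{t−1} + ε_t for t ≥ 1, and for an integer n ≥ 1 set ȳ_φ = ((1−φ)·Σ_{i=1}^{n−1} y_i + y_n)/n. Then E[ȳ_φ] = c and Var(ȳ_φ) = σ²/n. -/
/-!
The weights `1 - φ` are exactly those that make the recursion telescope:
`(1 - φ) ∑_{i<n} y_i + y_n = n c + ∑_{t ≤ n} ε_t`. Hence `ȳ_φ` is `c` plus the sample mean of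
`n` independent centred innovations of variance `σ²`.
-/

open MeasureTheory ProbabilityTheory Finset

theorem ar1_weighted_sum_eq {R : Type*} [CommRing R] {c φ : R} {y ε : ℕ → R} (h0 : y 0 = 0)
    (hrec : ∀ t, y (t + 1) = c + φ * y t + ε (t + 1)) (m : ℕ) :
    (1 - φ) * ∑ i ∈ Icc 1 m, y i + y (m + 1) =
      (m + 1) * c + ∑ j ∈ range (m + 1), ε (j + 1) := by
  induction m with
  | zero => simp [hrec 0, h0]
  | succ m ih =>
    rw [sum_Icc_succ_top (by omega), sum_range_succ, hrec (m + 1)]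
    push_cast
    linear_combination ih

theorem variance_mean_of_pairwise_indepFun {ι Ω : Type*} [MeasurableSpace Ω] {P : Measure Ω}
    {X : ι → Ω → ℝ} {σ : ℝ} (hindep : Pairwise fun i j => IndepFun (X i) (X j) P)
    (hL2 : ∀ i, MemLp (X i) 2 P) (hvar : ∀ i, variance (X i) P = σ ^ 2) (s : Finset ι) :
    variance (fun ω => (#s : ℝ)⁻¹ * ∑ i ∈ s, X i ω) P = σ ^ 2 / #s := by
  have hsum : variance (∑ i ∈ s, X i) P = #s * σ ^ 2 := by
    rw [IndepFun.variance_sum (fun i _ => hL2 i) fun i _ j _ hij => hindep hij]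
    simp [hvar]
  simp_rw [variance_const_mul, ← Finset.sum_apply, hsum]
  rcases eq_or_ne (#s : ℝ) 0 with hs | hs
  · simp [hs]
  · field_simp

/-- Equations (A.17)-(A.18): the summary statistic
`ȳ_φ = ((1-φ)·∑_{i=1}^{n-1} y_i + y_n)/n` of Example 1 satisfies
`E[ȳ_φ] = c` and `Var(ȳ_φ) = σ²/n`. -/
theorem ar1_summary_mean_var {Ω : Type*} [MeasurableSpace Ω] (P : Measure Ω)
    [IsProbabilityMeasure P]
    (σ : ℝ) (ε : ℕ → Ω → ℝ)
    (hindep : iIndepFun (fun t : ℕ => ε (t + 1)) P)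
    (hεL2 : ∀ t : ℕ, 1 ≤ t → MemLp (ε t) 2 P)
    (hεmean : ∀ t : ℕ, 1 ≤ t → ∫ ω, ε t ω ∂P = 0)
    (hεvar : ∀ t : ℕ, 1 ≤ t → variance (ε t) P = σ ^ 2)
    (c φ : ℝ)
    (y : ℕ → Ω → ℝ)
    (h0 : ∀ ω, y 0 ω = 0)
    (hrec : ∀ t : ℕ, 1 ≤ t → ∀ ω, y t ω = c + φ * y (t - 1) ω + ε t ω)
    (n : ℕ) (hn : 1 ≤ n)
    (ybar : Ω → ℝ)
    (hybar : ∀ ω, ybar ω = ((1 - φ) * ∑ i ∈ Finset.Icc 1 (n - 1), y i ω + y n ω) / n) :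
    (∫ ω, ybar ω ∂P = c) ∧ variance ybar P = σ ^ 2 / n := by
  set S : Ω → ℝ := fun ω => (#(range n) : ℝ)⁻¹ * ∑ j ∈ range n, ε (j + 1) ω
  have hybar_eq : ybar = fun ω => c + S ω := by
    ext ω
    obtain ⟨m, rfl⟩ : ∃ m, n = m + 1 := ⟨n - 1, by omega⟩
    have := ar1_weighted_sum_eq (y := (y · ω)) (ε := (ε · ω)) (h0 ω)
      (fun t => by simpa using hrec (t + 1) (by omega) ω) m
    rw [hybar, Nat.add_sub_cancel, this]
    simp only [S, card_range]
    push_cast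
    field_simp
  have hint : ∀ j ∈ range n, Integrable (ε (j + 1)) P :=
    fun j _ => (hεL2 (j + 1) (by omega)).integrable one_le_two
  have hS_int : Integrable S P := (integrable_finsetSum _ hint).const_mul _
  refine ⟨?_, ?_⟩
  · rw [hybar_eq, integral_add (integrable_const c) hS_int, integral_const_mul,
      integral_finsetSum _ hint, sum_eq_zero fun j _ => hεmean (j + 1) (by omega)]
    simp
  · rw [hybar_eq, variance_const_add hS_int.aestronglyMeasurable,
      variance_mean_of_pairwise_indepFun (X := fun t => ε (t + 1))
        (fun i j hij => hindep.indepFun hij) (fun t => hεL2 (t + 1) (by omega))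
        (fun t => hεvar (t + 1) (by omega)), card_range]
end

section
/- Let (Ω, 𝓕, P) be a probability space and let (ε_t)_{t≥1} be an independent family of square-integrable real random variables with E[ε_t] = 0 and Var(ε_t) = σ² for all t. Let c, φ ∈ ℝ with φ ≠ 1, define random variables y_t by y_0 = 0 and y_t = c + φ·y_{t−1} + ε_t for t ≥ 1, and for an integer n ≥ 1 set ȳ_φ = ((1−φ)·Σ_{i=1}^{n−1} y_i + y_n)/n. Then E[(y_{n+1} − E[y_{n+1}])·(ȳ_φ − E[ȳ_φ])] = σ²·φ·(1 − φ^n)/(n·(1 − φ)). -/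
/-!
Subtracting `φ y_{i-1}` from `y_i` telescopes the summary statistic: with `y_0 = 0`,
`(1 - φ) ∑_{i<n} y_i + y_n = ∑_{i ≤ n} (y_i - φ y_{i-1}) = n c + ∑_{s ≤ n} ε_s`,
so `ȳ_φ` is `c` plus the mean of the first `n` innovations. On the other hand unrolling the
recursion gives `y_{n+1} = const + ∑_{s ≤ n+1} φ^{n+1-s} ε_s`. As the innovations are
uncorrelated with common variance `σ²`, the covariance is `σ²/n · ∑_{s ≤ n} φ^{n+1-s}`,
a geometric sum.
-/

open MeasureTheory ProbabilityTheory Finset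

section Recursion

variable {c φ : ℝ} {y e : ℕ → ℝ}

theorem ar1_eq_geom_sum_add (h0 : y 0 = 0) (hrec : ∀ t, y (t + 1) = c + φ * y t + e t)
    (t : ℕ) :
    y t = c * ∑ i ∈ range t, φ ^ i + ∑ s ∈ range t, φ ^ (t - 1 - s) * e s := by
  induction t with
  | zero => simp [h0]
  | succ t ih =>
    have hshift :
        ∑ s ∈ range t, φ ^ (t - s) * e s = φ * ∑ s ∈ range t, φ ^ (t - 1 - s) * e s := by
      rw [mul_sum]
      refine sum_congr rfl fun s hs => ?_
      rw [show t - s = t - 1 - s + 1 by have := mem_range.mp hs; omega, pow_succ]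
      ring
    rw [hrec, ih, geom_sum_succ, sum_range_succ, Nat.add_sub_cancel, Nat.sub_self, hshift]
    ring

theorem ar1_one_sub_mul_sum_add (h0 : y 0 = 0) (hrec : ∀ t, y (t + 1) = c + φ * y t + e t)
    (k : ℕ) :
    (1 - φ) * ∑ i ∈ Icc 1 k, y i + y (k + 1) = (k + 1) * c + ∑ s ∈ range (k + 1), e s := by
  induction k with
  | zero => simp [hrec 0, h0]
  | succ k ih =>
    rw [sum_Icc_succ_top (by omega), sum_range_succ, hrec (k + 1)]
    push_cast
    linear_combination ih

end Recursion

theorem sum_range_pow_sub (φ : ℝ) (n : ℕ) :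
    ∑ s ∈ range n, φ ^ (n - s) = φ * ∑ i ∈ range n, φ ^ i := by
  rw [mul_sum, ← sum_range_reflect]
  refine sum_congr rfl fun s hs => ?_
  rw [show n - (n - 1 - s) = s + 1 by have := mem_range.mp hs; omega, pow_succ']

namespace ProbabilityTheory

variable {Ω ι : Type*} [MeasurableSpace Ω] {μ : Measure Ω} [IsFiniteMeasure μ]
  {X : ι → Ω → ℝ}

theorem covariance_sum_mul_sum_mul [DecidableEq ι] (hX : ∀ i, MemLp (X i) 2 μ)
    (huncorr : Pairwise fun i j => cov[X i, X j; μ] = 0) (a b : ι → ℝ) (s t : Finset ι) :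
    cov[fun ω => ∑ i ∈ s, a i * X i ω, fun ω => ∑ j ∈ t, b j * X j ω; μ]
      = ∑ i ∈ s ∩ t, a i * b i * Var[X i; μ] := by
  have hcov : ∀ i j, cov[fun ω => a i * X i ω, fun ω => b j * X j ω; μ]
      = if i = j then a i * b i * Var[X i; μ] else 0 := by
    intro i j
    rw [covariance_const_mul_left, covariance_const_mul_right]
    split_ifs with hij
    · subst hij
      rw [covariance_self (hX i).aemeasurable]
      ring
    · rw [huncorr hij, mul_zero, mul_zero]
  rw [covariance_fun_sum_fun_sum' (fun i _ => (hX i).const_mul (a i))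
    (fun j _ => (hX j).const_mul (b j))]
  simp_rw [hcov, sum_ite_eq, sum_ite_mem]

end ProbabilityTheory

theorem ar1_pred_summary_covariance_general {Ω : Type*} [MeasurableSpace Ω] (P : Measure Ω)
    [IsProbabilityMeasure P]
    (σ : ℝ) (ε : ℕ → Ω → ℝ)
    (hindep : iIndepFun (fun t : ℕ => ε (t + 1)) P)
    (hεL2 : ∀ t : ℕ, 1 ≤ t → MemLp (ε t) 2 P)
    (hεvar : ∀ t : ℕ, 1 ≤ t → variance (ε t) P = σ ^ 2)
    (c φ : ℝ) (hφ : φ ≠ 1)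
    (y : ℕ → Ω → ℝ)
    (h0 : ∀ ω, y 0 ω = 0)
    (hrec : ∀ t : ℕ, 1 ≤ t → ∀ ω, y t ω = c + φ * y (t - 1) ω + ε t ω)
    (n : ℕ) (hn : 1 ≤ n)
    (ybar : Ω → ℝ)
    (hybar : ∀ ω, ybar ω = ((1 - φ) * ∑ i ∈ Finset.Icc 1 (n - 1), y i ω + y n ω) / n) :
    ∫ ω, (y (n + 1) ω - ∫ ω', y (n + 1) ω' ∂P) * (ybar ω - ∫ ω', ybar ω' ∂P) ∂P
      = σ ^ 2 * φ * (1 - φ ^ n) / (n * (1 - φ)) := by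
  obtain ⟨k, rfl⟩ : ∃ k, n = k + 1 := ⟨n - 1, by omega⟩
  set e : ℕ → Ω → ℝ := fun t => ε (t + 1)
  have he : ∀ ω t, y (t + 1) ω = c + φ * y t ω + e t ω :=
    fun ω t => hrec (t + 1) (by omega) ω
  have heL2 : ∀ s, MemLp (e s) 2 P := fun s => hεL2 (s + 1) (by omega)
  have hevar : ∀ s, Var[e s; P] = σ ^ 2 := fun s => hεvar (s + 1) (by omega)
  have huncorr : Pairwise fun s r => cov[e s, e r; P] = 0 := fun s r hsr =>
    (hindep.indepFun hsr).covariance_eq_zero (heL2 s) (heL2 r)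
  have hpred : y (k + 1 + 1) = fun ω => c * ∑ i ∈ range (k + 2), φ ^ i
      + ∑ s ∈ range (k + 2), φ ^ (k + 1 - s) * e s ω :=
    funext fun ω => ar1_eq_geom_sum_add (y := (y · ω)) (h0 ω) (he ω) (k + 2)
  have hsummary : ybar = fun ω => c + ∑ s ∈ range (k + 1), (k + 1 : ℝ)⁻¹ * e s ω := by
    funext ω
    rw [hybar, Nat.add_sub_cancel, ar1_one_sub_mul_sum_add (h0 ω) (he ω), ← mul_sum]
    push_cast
    field_simp
  have hint (a : ℕ → ℝ) (m : ℕ) :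
      Integrable (fun ω => ∑ s ∈ range m, a s * e s ω) P :=
    integrable_finsetSum _ fun s _ => ((heL2 s).integrable one_le_two).const_mul _
  change cov[y (k + 1 + 1), ybar; P] = _
  rw [hpred, hsummary, covariance_const_add_left (hint _ _), covariance_const_add_right (hint _ _),
    covariance_sum_mul_sum_mul heL2 huncorr, inter_eq_right.mpr (range_subset_range.mpr (by omega))]
  simp_rw [hevar, ← sum_mul, sum_range_pow_sub, geom_sum_eq hφ]
  have hφ1 : φ - 1 ≠ 0 := sub_ne_zero.mpr hφ
  push_cast
  field_simp
  ring

/-- Equation (A.28): `cov(y_{n+1}, ȳ_φ) = σ² φ (1 - φ^n)/(n (1 - φ))` in the AR(1) model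
of Example 1. -/
theorem ar1_pred_summary_covariance {Ω : Type*} [MeasurableSpace Ω] (P : Measure Ω)
    [IsProbabilityMeasure P]
    (σ : ℝ) (ε : ℕ → Ω → ℝ)
    (hindep : iIndepFun (fun t : ℕ => ε (t + 1)) P)
    (hεL2 : ∀ t : ℕ, 1 ≤ t → MemLp (ε t) 2 P)
    (hεmean : ∀ t : ℕ, 1 ≤ t → ∫ ω, ε t ω ∂P = 0)
    (hεvar : ∀ t : ℕ, 1 ≤ t → variance (ε t) P = σ ^ 2)
    (c φ : ℝ) (hφ : φ ≠ 1)
    (y : ℕ → Ω → ℝ)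
    (h0 : ∀ ω, y 0 ω = 0)
    (hrec : ∀ t : ℕ, 1 ≤ t → ∀ ω, y t ω = c + φ * y (t - 1) ω + ε t ω)
    (n : ℕ) (hn : 1 ≤ n)
    (ybar : Ω → ℝ)
    (hybar : ∀ ω, ybar ω = ((1 - φ) * ∑ i ∈ Finset.Icc 1 (n - 1), y i ω + y n ω) / n) :
    ∫ ω, (y (n + 1) ω - ∫ ω', y (n + 1) ω' ∂P) * (ybar ω - ∫ ω', ybar ω' ∂P) ∂P
      = σ ^ 2 * φ * (1 - φ ^ n) / (n * (1 - φ)) :=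
  ar1_pred_summary_covariance_general P σ ε hindep hεL2 hεvar c φ hφ y h0 hrec n hn ybar hybar
end

section
/- For every integer n ≥ 1 and every φ ∈ ℝ with −1 < φ < 1: (1 − φ^{2(n+1)})/(1 − φ²) − φ²·(1 − φ^n)²/(n·(1 − φ)²) ≥ 1. -/
/-- The quantity `a_{φ,n}` of equation (3.10) satisfies `a_{φ,n} ≥ 1` for `|φ| < 1`. -/
theorem a_phi_n_ge_one (n : ℕ) (hn : 1 ≤ n) (φ : ℝ) (h1 : -1 < φ) (h2 : φ < 1) :
    1 ≤ (1 - φ ^ (2 * (n + 1))) / (1 - φ ^ 2)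
      - φ ^ 2 * (1 - φ ^ n) ^ 2 / (n * (1 - φ) ^ 2) := by
  have hn' : (0:ℝ) < n := by exact_mod_cast hn
  have hφ2 : φ ^ 2 < 1 := by nlinarith
  have hd : (0:ℝ) < 1 - φ ^ 2 := by linarith
  have hd1 : (0:ℝ) < 1 - φ := by linarith
  set g : ℕ → ℝ := fun k => φ ^ (k + 1) with hg
  have hgeo : (1 - φ ^ (2 * (n + 1))) / (1 - φ ^ 2)
      = ∑ k ∈ Finset.range (n + 1), (φ ^ 2) ^ k := by
    rw [div_eq_iff (ne_of_gt hd)]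
    have h := geom_sum_mul (φ ^ 2) (n + 1)
    have hp : (φ ^ 2) ^ (n + 1) = φ ^ (2 * (n + 1)) := by rw [← pow_mul]
    nlinarith [h, hp]
  have hT : φ * (1 - φ ^ n) / (1 - φ) = ∑ k ∈ Finset.range n, g k := by
    rw [div_eq_iff (ne_of_gt hd1)]
    have h := geom_sum_mul φ n
    have : ∑ k ∈ Finset.range n, g k = φ * ∑ k ∈ Finset.range n, φ ^ k := by
      rw [Finset.mul_sum]
      exact Finset.sum_congr rfl fun k _ => by ring
    rw [this]
    nlinarith [h]
  have hTsq : φ ^ 2 * (1 - φ ^ n) ^ 2 / (n * (1 - φ) ^ 2)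
      = (∑ k ∈ Finset.range n, g k) ^ 2 / n := by
    rw [← hT]
    field_simp
  have hsplit : ∑ k ∈ Finset.range (n + 1), (φ ^ 2) ^ k
      = 1 + ∑ k ∈ Finset.range n, (g k) ^ 2 := by
    rw [Finset.sum_range_succ']
    simp only [pow_zero]
    rw [add_comm]
    congr 1
    exact Finset.sum_congr rfl fun k _ => by simp [hg]; ring
  have hcs : (∑ k ∈ Finset.range n, g k) ^ 2
      ≤ (n : ℝ) * ∑ k ∈ Finset.range n, (g k) ^ 2 := by
    have h := Finset.sum_mul_sq_le_sq_mul_sq (Finset.range n) (fun _ => (1:ℝ)) g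
    simpa using h
  have hdiv : (∑ k ∈ Finset.range n, g k) ^ 2 / n
      ≤ ∑ k ∈ Finset.range n, (g k) ^ 2 := by
    rw [div_le_iff₀ hn']
    linarith [hcs]
  rw [hgeo, hTsq, hsplit]
  linarith
end

section
/- Let v > 0, y ∈ ℝ, and h ≥ 0. Then the Gaussian probability measure N(y, v) on ℝ satisfies N(y, v)([y − h, y + h]) ≥ (√2 · h)/√(π·v) · exp(−h²/(2v)). -/
/-!
On `[y - h, y + h]` the density of `N(y, v)` is smallest at the endpoints, where it equals
`(2πv)^{-1/2} exp(-h²/(2v))`; multiplying by the length `2h` of the interval gives the bound.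
-/

open MeasureTheory ProbabilityTheory

lemma MeasureTheory.const_mul_le_setLIntegral {α : Type*} [MeasurableSpace α] {μ : Measure α}
    {f : α → ENNReal} {s : Set α} {c : ENNReal} (hs : MeasurableSet s)
    (hc : ∀ x ∈ s, c ≤ f x) : c * μ s ≤ ∫⁻ x in s, f x ∂μ :=
  (setLIntegral_const s c).symm.trans_le (setLIntegral_mono' hs hc)

namespace ProbabilityTheory

lemma gaussianPDFReal_le_of_abs_sub_le (μ : ℝ) (v : NNReal) {x x' : ℝ}
    (hx : |x - μ| ≤ |x' - μ|) : gaussianPDFReal μ v x' ≤ gaussianPDFReal μ v x := by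
  have hsq : (x - μ) ^ 2 ≤ (x' - μ) ^ 2 := sq_le_sq.mpr hx
  unfold gaussianPDFReal
  gcongr

lemma gaussianPDFReal_mean_add_mul (μ : ℝ) (v : NNReal) (h : ℝ) :
    gaussianPDFReal μ v (μ + h) * (2 * h)
      = Real.sqrt 2 * h / Real.sqrt (Real.pi * v) * Real.exp (-h ^ 2 / (2 * v)) := by
  have hsqrt : Real.sqrt (2 * Real.pi * v) = Real.sqrt 2 * Real.sqrt (Real.pi * v) := by
    rw [mul_assoc, Real.sqrt_mul zero_le_two]
  rw [gaussianPDFReal, add_sub_cancel_left, hsqrt]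
  field_simp
  rw [Real.sq_sqrt zero_le_two, mul_comm]

end ProbabilityTheory

theorem gaussian_interval_lower_bound_general (v : NNReal) (hv : 0 < v) (y : ℝ) (h : ℝ) :
    ENNReal.ofReal (Real.sqrt 2 * h / Real.sqrt (Real.pi * v) * Real.exp (-h ^ 2 / (2 * v)))
      ≤ gaussianReal y v (Set.Icc (y - h) (y + h)) := by
  rw [gaussianReal_apply y hv.ne']
  calc ENNReal.ofReal (Real.sqrt 2 * h / Real.sqrt (Real.pi * v) * Real.exp (-h ^ 2 / (2 * v)))
      = gaussianPDF y v (y + h) * volume (Set.Icc (y - h) (y + h)) := by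
        rw [Real.volume_Icc, gaussianPDF, ← ENNReal.ofReal_mul (gaussianPDFReal_nonneg _ _ _),
          show y + h - (y - h) = 2 * h by ring, gaussianPDFReal_mean_add_mul]
    _ ≤ ∫⁻ x in Set.Icc (y - h) (y + h), gaussianPDF y v x :=
        const_mul_le_setLIntegral measurableSet_Icc fun x hx ↦
          ENNReal.ofReal_le_ofReal <| gaussianPDFReal_le_of_abs_sub_le y v <| by
            rw [add_sub_cancel_left, abs_sub_le_iff]
            constructor <;> linarith [hx.1, hx.2, le_abs_self h]

/-- The probability that a Gaussian `N(y, v)` sample falls within distance `h` of its mean `y`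
is at least `√2·h/√(π·v) · exp(-h²/(2v))` (Section A.4 of the supplementary material). -/
theorem gaussian_interval_lower_bound (v : NNReal) (hv : 0 < v) (y : ℝ) (h : ℝ) (hh : 0 ≤ h) :
    ENNReal.ofReal (Real.sqrt 2 * h / Real.sqrt (Real.pi * v) * Real.exp (-h ^ 2 / (2 * v)))
      ≤ gaussianReal y v (Set.Icc (y - h) (y + h)) :=
  gaussian_interval_lower_bound_general v hv y h
end

section
/- Let σ > 0, let n ≥ 1 be an integer, let φ ∈ ℝ with |φ| < 1, and let h ≥ 0 and y_n ∈ ℝ. Set v = σ²·(1 − φ^{2n})/(1 − φ²). Then there exists c ∈ ℝ such that, with m_c = c·(1 − φ^n)/(1 − φ), the Gaussian probability measure N(m_c, v) satisfies N(m_c, v)([y_n − h, y_n + h]) ≥ (√2·h)/√(π·σ²) · √(1 − φ²) · exp(−h²/(2σ²)). -/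
open MeasureTheory ProbabilityTheory

/-- The case `|φ| < 1` of equation (4.1): the maximal (over `c`) ABC acceptance probability
`P(|z_n - y_n| ≤ h | c)` is bounded below by a positive constant not depending on `n`. -/
theorem abc_acceptance_lower_bound (σ : ℝ) (hσ : 0 < σ) (n : ℕ) (hn : 1 ≤ n)
    (φ : ℝ) (hφ : |φ| < 1) (h : ℝ) (hh : 0 ≤ h) (yn : ℝ) :
    ∃ c : ℝ,
      ENNReal.ofReal (Real.sqrt 2 * h / Real.sqrt (Real.pi * σ ^ 2)
          * Real.sqrt (1 - φ ^ 2) * Real.exp (-h ^ 2 / (2 * σ ^ 2)))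
        ≤ gaussianReal (c * (1 - φ ^ n) / (1 - φ))
            (σ ^ 2 * (1 - φ ^ (2 * n)) / (1 - φ ^ 2)).toNNReal
            (Set.Icc (yn - h) (yn + h)) := by
  have habs := abs_lt.mp hφ
  have hφ2 : φ ^ 2 < 1 := by nlinarith [habs.1, habs.2]
  have hφn : φ ^ n < 1 := by
    calc φ ^ n ≤ |φ ^ n| := le_abs_self _
    _ = |φ| ^ n := abs_pow φ n
    _ < 1 := pow_lt_one₀ (abs_nonneg φ) hφ (by omega)
  have hφ2n_nonneg : 0 ≤ φ ^ (2 * n) := by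
    rw [pow_mul]; exact pow_nonneg (sq_nonneg φ) n
  have hφ2n_le : φ ^ (2 * n) ≤ φ ^ 2 := by
    rw [pow_mul]
    calc (φ ^ 2) ^ n ≤ (φ ^ 2) ^ 1 :=
          pow_le_pow_of_le_one (sq_nonneg φ) hφ2.le hn
    _ = φ ^ 2 := pow_one _
  have hφ2n_lt : φ ^ (2 * n) < 1 := lt_of_le_of_lt hφ2n_le hφ2
  set vR : ℝ := σ ^ 2 * (1 - φ ^ (2 * n)) / (1 - φ ^ 2) with hvRdef
  have hvRpos : 0 < vR :=
    div_pos (mul_pos (pow_pos hσ 2) (by linarith)) (by linarith)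
  have hkey : vR * (1 - φ ^ 2) = σ ^ 2 * (1 - φ ^ (2 * n)) := by
    rw [hvRdef, div_mul_cancel₀ _ (by linarith : (1:ℝ) - φ ^ 2 ≠ 0)]
  have hvR_ge : σ ^ 2 ≤ vR := by nlinarith [pow_pos hσ 2]
  have hvR_le : vR * (1 - φ ^ 2) ≤ σ ^ 2 := by nlinarith [pow_pos hσ 2]
  set vN : NNReal := vR.toNNReal with hvNdef
  have hvNcoe : (vN : ℝ) = vR := Real.coe_toNNReal _ hvRpos.le
  have hvNne : vN ≠ 0 := by
    simp only [hvNdef, ne_eq, Real.toNNReal_eq_zero, not_le]; exact hvRpos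
  refine ⟨yn * (1 - φ) / (1 - φ ^ n), ?_⟩
  have hmean : yn * (1 - φ) / (1 - φ ^ n) * (1 - φ ^ n) / (1 - φ) = yn := by
    have h1 : (1 : ℝ) - φ ^ n ≠ 0 := by linarith
    have h2 : (1 : ℝ) - φ ≠ 0 := by linarith [habs.2]
    field_simp
  rw [hmean, gaussianReal_apply _ hvNne]
  set K : ℝ := (Real.sqrt (2 * Real.pi * vR))⁻¹ * Real.exp (-h ^ 2 / (2 * vR)) with hKdef
  have hKnonneg : 0 ≤ K := by positivity
  have hK : ∀ x ∈ Set.Icc (yn - h) (yn + h), ENNReal.ofReal K ≤ gaussianPDF yn vN x := by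
    intro x hx
    refine ENNReal.ofReal_le_ofReal ?_
    rw [gaussianPDFReal, hvNcoe]
    refine mul_le_mul_of_nonneg_left ?_ (by positivity)
    refine Real.exp_le_exp.mpr ?_
    rw [div_le_div_iff_of_pos_right (by positivity)]
    have h1 : -h ≤ x - yn := by have := hx.1; linarith
    have h2 : x - yn ≤ h := by have := hx.2; linarith
    nlinarith
  have hexp : Real.exp (-h ^ 2 / (2 * σ ^ 2)) ≤ Real.exp (-h ^ 2 / (2 * vR)) := by
    refine Real.exp_le_exp.mpr ?_
    rw [neg_div, neg_div, neg_le_neg_iff]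
    exact div_le_div_of_nonneg_left (sq_nonneg h) (by positivity) (by linarith)
  have hcoef : Real.sqrt 2 * Real.sqrt (1 - φ ^ 2) / Real.sqrt (Real.pi * σ ^ 2)
      ≤ 2 / Real.sqrt (2 * Real.pi * vR) := by
    rw [div_le_div_iff₀ (by positivity) (by positivity)]
    have e1 : Real.sqrt 2 * Real.sqrt (1 - φ ^ 2) * Real.sqrt (2 * Real.pi * vR)
        = Real.sqrt (2 * (1 - φ ^ 2) * (2 * Real.pi * vR)) := by
      rw [← Real.sqrt_mul (by norm_num), ← Real.sqrt_mul (by nlinarith : (0:ℝ) ≤ 2 * (1 - φ ^ 2))]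
    have e2 : (2 : ℝ) * Real.sqrt (Real.pi * σ ^ 2)
        = Real.sqrt (4 * (Real.pi * σ ^ 2)) := by
      have h4 : Real.sqrt 4 = 2 := by
        rw [show (4 : ℝ) = 2 ^ 2 by norm_num, Real.sqrt_sq (by norm_num : (0:ℝ) ≤ 2)]
      rw [Real.sqrt_mul (by norm_num : (0:ℝ) ≤ 4), h4]
    rw [e1, e2]
    apply Real.sqrt_le_sqrt
    nlinarith [Real.pi_pos, hvR_le]
  have hreal : Real.sqrt 2 * h / Real.sqrt (Real.pi * σ ^ 2)
      * Real.sqrt (1 - φ ^ 2) * Real.exp (-h ^ 2 / (2 * σ ^ 2)) ≤ K * (2 * h) := by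
    have h1 : Real.sqrt 2 * Real.sqrt (1 - φ ^ 2) / Real.sqrt (Real.pi * σ ^ 2) * h
        ≤ 2 / Real.sqrt (2 * Real.pi * vR) * h :=
      mul_le_mul_of_nonneg_right hcoef hh
    have h2 : Real.sqrt 2 * Real.sqrt (1 - φ ^ 2) / Real.sqrt (Real.pi * σ ^ 2) * h
          * Real.exp (-h ^ 2 / (2 * σ ^ 2))
        ≤ 2 / Real.sqrt (2 * Real.pi * vR) * h * Real.exp (-h ^ 2 / (2 * vR)) :=
      mul_le_mul h1 hexp (Real.exp_pos _).le (by positivity)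
    calc Real.sqrt 2 * h / Real.sqrt (Real.pi * σ ^ 2)
          * Real.sqrt (1 - φ ^ 2) * Real.exp (-h ^ 2 / (2 * σ ^ 2))
        = Real.sqrt 2 * Real.sqrt (1 - φ ^ 2) / Real.sqrt (Real.pi * σ ^ 2) * h
          * Real.exp (-h ^ 2 / (2 * σ ^ 2)) := by ring
      _ ≤ 2 / Real.sqrt (2 * Real.pi * vR) * h * Real.exp (-h ^ 2 / (2 * vR)) := h2
      _ = K * (2 * h) := by rw [hKdef]; field_simp
  calc ENNReal.ofReal (Real.sqrt 2 * h / Real.sqrt (Real.pi * σ ^ 2)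
        * Real.sqrt (1 - φ ^ 2) * Real.exp (-h ^ 2 / (2 * σ ^ 2)))
      ≤ ENNReal.ofReal (K * (2 * h)) := ENNReal.ofReal_le_ofReal hreal
    _ = ENNReal.ofReal K * volume (Set.Icc (yn - h) (yn + h)) := by
        rw [Real.volume_Icc, ENNReal.ofReal_mul hKnonneg]
        congr 1
        ring_nf
    _ = ∫⁻ _ in Set.Icc (yn - h) (yn + h), ENNReal.ofReal K :=
        (setLIntegral_const _ _).symm
    _ ≤ ∫⁻ x in Set.Icc (yn - h) (yn + h), gaussianPDF yn vN x :=
        setLIntegral_mono ((measurable_gaussianPDFReal yn vN).ennreal_ofReal) hK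
end

section
/- Let κ : ℝ^d → [0,∞), π : ℝ^p → [0,∞), q : ℝ^p × ℝ^p → [0,∞), and ℓ : ℝ^k × ℝ^d × ℝ^p → [0,∞) be arbitrary functions. For a state x = (z̃, s, θ) ∈ ℝ^k × ℝ^d × ℝ^p define the unnormalized target f(x) = κ(s)·ℓ(z̃, s, θ)·π(θ), the proposal density g(x, x′) = ℓ(z̃′, s′, θ′)·q(θ′, θ) where x′ = (z̃′, s′, θ′), and the acceptance probability α(x, x′) = min{1, (κ(s′)·π(θ′)·q(θ, θ′)) / (κ(s)·π(θ)·q(θ′, θ))}. Then for all states x = (z̃, s, θ) and x′ = (z̃′, s′, θ′) such that κ(s)·π(θ)·q(θ′, θ) > 0 and κ(s′)·π(θ′)·q(θ, θ′) > 0, the detailed balance identity holds: f(x)·g(x, x′)·α(x, x′) = f(x′)·g(x′, x)·α(x′, x). -/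
/-- Detailed balance for the ABC-P Metropolis-Hastings sampler of Section 4.1: with target
`f(z̃,s,θ) = κ(s) ℓ(z̃,s,θ) π(θ)`, proposal `g(x,x') = ℓ(z̃',s',θ') q(θ',θ)` and acceptance
probability (4.3), `f(x) g(x,x') α(x,x') = f(x') g(x',x) α(x',x)`. -/
theorem abcP_mcmc_detailed_balance {k d p : ℕ}
    (κ : (Fin d → ℝ) → ℝ) (π : (Fin p → ℝ) → ℝ)
    (q : (Fin p → ℝ) → (Fin p → ℝ) → ℝ)
    (ℓ : (Fin k → ℝ) → (Fin d → ℝ) → (Fin p → ℝ) → ℝ)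
    (hκ : ∀ s, 0 ≤ κ s) (hπ : ∀ θ, 0 ≤ π θ)
    (hq : ∀ θ' θ, 0 ≤ q θ' θ) (hℓ : ∀ zt s θ, 0 ≤ ℓ zt s θ)
    (f : (Fin k → ℝ) × (Fin d → ℝ) × (Fin p → ℝ) → ℝ)
    (hf : ∀ x, f x = κ x.2.1 * ℓ x.1 x.2.1 x.2.2 * π x.2.2)
    (g : ((Fin k → ℝ) × (Fin d → ℝ) × (Fin p → ℝ)) →
         ((Fin k → ℝ) × (Fin d → ℝ) × (Fin p → ℝ)) → ℝ)
    (hg : ∀ x x', g x x' = ℓ x'.1 x'.2.1 x'.2.2 * q x'.2.2 x.2.2)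
    (α : ((Fin k → ℝ) × (Fin d → ℝ) × (Fin p → ℝ)) →
         ((Fin k → ℝ) × (Fin d → ℝ) × (Fin p → ℝ)) → ℝ)
    (hα : ∀ x x', α x x'
      = min 1 ((κ x'.2.1 * π x'.2.2 * q x.2.2 x'.2.2) / (κ x.2.1 * π x.2.2 * q x'.2.2 x.2.2)))
    (x x' : (Fin k → ℝ) × (Fin d → ℝ) × (Fin p → ℝ))
    (hpos : 0 < κ x.2.1 * π x.2.2 * q x'.2.2 x.2.2)
    (hpos' : 0 < κ x'.2.1 * π x'.2.2 * q x.2.2 x'.2.2) :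
    f x * g x x' * α x x' = f x' * g x' x * α x' x := by
  set a := κ x.2.1 * π x.2.2 * q x'.2.2 x.2.2 with ha
  set b := κ x'.2.1 * π x'.2.2 * q x.2.2 x'.2.2 with hb
  have key : ∀ u v : ℝ, 0 < u → u * min 1 (v / u) = min u v := by
    intro u v hu
    rw [mul_min_of_nonneg _ _ hu.le, mul_one, mul_div_cancel₀ _ hu.ne']
  have h1 : f x * g x x' * α x x'
      = ℓ x.1 x.2.1 x.2.2 * ℓ x'.1 x'.2.1 x'.2.2 * (a * min 1 (b / a)) := by
    rw [hf, hg, hα]; ring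
  have h2 : f x' * g x' x * α x' x
      = ℓ x.1 x.2.1 x.2.2 * ℓ x'.1 x'.2.1 x'.2.2 * (b * min 1 (a / b)) := by
    rw [hf, hg, hα]; ring
  rw [h1, h2, key a b hpos, key b a hpos', min_comm]
end
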